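/- arXiv:2304.02555 — 3 statements merged into one kernel-verified Lean document; each statement's English description precedes it below -/
import Mathlib

section
/- Let X ⊆ {0,1}^n be nonempty. Then the number of subsets B ⊆ [n] shattered by X (i.e., sets B such that every function B → {0,1} arises as the restriction to B of the indicator of some x ∈ X) is at least |X|. -/
/-!
Identifying a vector `x ∈ {0,1}^n` with its support turns `X` into a family of subsets of `[n]`
of the same size, and a set shattered by that family (in the sense of traces, `Finset.Shatters`)
is shattered by `X` in the sense of restrictions. The bound is then Pajor's lemma for set
families, `Finset.card_le_card_shatterer`, which is proved by down-compression.
-/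

open Finset

section Support

variable {α : Type*} [Fintype α]

def trueSet (x : α → Bool) : Finset α := univ.filter (x · = true)

lemma mem_trueSet {x : α → Bool} {i : α} : i ∈ trueSet x ↔ x i = true := by
  simp [trueSet]

lemma trueSet_injective : Function.Injective (trueSet (α := α)) := fun x y hxy =>
  funext fun i => Bool.eq_iff_iff.2 <| by rw [← mem_trueSet, ← mem_trueSet, hxy]

lemma exists_eqOn_of_shatters [DecidableEq α] {X : Finset (α → Bool)} {B : Finset α}
    (hB : (X.image trueSet).Shatters B) (a : α → Bool) : ∃ x ∈ X, ∀ i ∈ B, x i = a i := by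
  obtain ⟨_, hu, htrace⟩ := hB (filter_subset (a · = true) B)
  obtain ⟨x, hxX, rfl⟩ := mem_image.1 hu
  refine ⟨x, hxX, fun i hi => Bool.eq_iff_iff.2 ?_⟩
  have := congrArg (i ∈ ·) htrace
  simpa [mem_trueSet, hi] using this

end Support

theorem stmt0_general (n : ℕ) (X : Finset (Fin n → Bool)) :
    X.card ≤ (Finset.univ.filter (fun B : Finset (Fin n) =>
      ∀ a : Fin n → Bool, ∃ x ∈ X, ∀ i ∈ B, x i = a i)).card :=
  calc X.card = (X.image trueSet).card := (card_image_of_injective _ trueSet_injective).symm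
    _ ≤ (X.image trueSet).shatterer.card := card_le_card_shatterer _
    _ ≤ _ := card_le_card fun B hB =>
      mem_filter.2 ⟨mem_univ B, exists_eqOn_of_shatters (mem_shatterer.1 hB)⟩

/-- Pajor's strengthening of the Sauer–Shelah lemma: a nonempty set
`X ⊆ {0,1}^n` shatters at least `|X|` subsets of `[n]`. -/
theorem stmt0 (n : ℕ) (X : Finset (Fin n → Bool)) (hX : X.Nonempty) :
    X.card ≤ (Finset.univ.filter (fun B : Finset (Fin n) =>
      ∀ a : Fin n → Bool, ∃ x ∈ X, ∀ i ∈ B, x i = a i)).card :=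
  stmt0_general n X
end

section
/- Let X be a random variable taking values in {0,1}^n with Shannon entropy H(X) ≥ n - k, where k ≥ 0. Then for every t with 1 ≤ t ≤ n and every δ > 0, if T is a uniformly random subset of [n] of size t, then with probability at least 1 - δ over T, the entropy of the marginal X_T satisfies H(X_T) ≥ t - kt/(δn). -/
open Finset
open scoped Classical

/-- Shannon entropy (in bits) of a finitely supported distribution. -/
noncomputable def ent {α : Type*} [Fintype α] (p : α → ℝ) : ℝ :=
  ∑ a, -(p a * Real.logb 2 (p a))

/-- Marginal of a distribution on `{0,1}^n` onto the coordinates in `T`. -/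
noncomputable def marg {n : ℕ} (p : (Fin n → Bool) → ℝ) (T : Finset (Fin n)) :
    ({i : Fin n // i ∈ T} → Bool) → ℝ :=
  fun a => ∑ x ∈ Finset.univ.filter
    (fun x : Fin n → Bool => ∀ i : {i : Fin n // i ∈ T}, x i.1 = a i), p x

/-!
Write `f S = H(X_S)`. Entropy is submodular, `f (S ∪ T) + f (S ∩ T) ≤ f S + f T`: by Gibbs'
inequality `∑ p log R ≤ 0`, applied to the ratio
`R = P(X_S) P(X_T) / (P(X_{S ∪ T}) P(X_{S ∩ T}))`, whose `p`-mean is at most one.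
Chaining submodularity along the initial segments of `[n]` gives
`f T ≥ ∑_{i ∈ T} (f [0, i] - f [0, i))`, and averaging over all `t`-sets (each `i` lies in
`C(n-1, t-1)` of them) gives Shearer's bound `C(n-1, t-1) H(X) ≤ ∑_T H(X_T)`.
Hence the deficits `t - H(X_T) ≥ 0` have mean at most `kt/n`, and by Markov's inequality at most
a `δ`-fraction of them exceeds `kt/(δn)`.
-/

open Real

namespace MarginalEntropy

section Law

variable {Ω : Type*} [Fintype Ω] (p : Ω → ℝ)

noncomputable def law {β : Type*} (g : Ω → β) (b : β) : ℝ :=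
  ∑ x ∈ univ.filter (fun x => g x = b), p x

variable {p} {β : Type*}

lemma law_nonneg (hp0 : ∀ x, 0 ≤ p x) (g : Ω → β) (b : β) : 0 ≤ law p g b :=
  sum_nonneg fun x _ => hp0 x

lemma law_apply_pos (hp0 : ∀ x, 0 ≤ p x) (g : Ω → β) {x : Ω} (hx : 0 < p x) :
    0 < law p g (g x) :=
  hx.trans_le (single_le_sum (fun y _ => hp0 y) (by simp))

lemma law_apply_of_subsingleton [Subsingleton β] (g : Ω → β) (x : Ω) :
    law p g (g x) = ∑ y, p y := by
  rw [law, filter_true_of_mem fun y _ => Subsingleton.elim _ _]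

lemma sum_law [Fintype β] (g : Ω → β) : ∑ b, law p g b = ∑ x, p x :=
  sum_fiberwise univ g p

lemma ent_law [Fintype β] (g : Ω → β) :
    ent (law p g) = ∑ x, p x * -logb 2 (law p g (g x)) := by
  rw [ent, ← sum_fiberwise univ g]
  refine sum_congr rfl fun b _ => ?_
  rw [sum_congr rfl fun x hx => by rw [(mem_filter.mp hx).2], ← sum_mul, law, mul_neg]

lemma law_apply_eq_of_fiber_iff {γ : Type*} {g : Ω → β} {h : Ω → γ} {x : Ω}
    (hgh : ∀ y, g y = g x ↔ h y = h x) : law p g (g x) = law p h (h x) := by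
  simp only [law, hgh]

end Law

lemma sum_mul_logb_nonpos {ι : Type*} [Fintype ι] {p R : ι → ℝ} (hp0 : ∀ i, 0 ≤ p i)
    (hR : ∀ i, 0 < p i → 0 < R i) (hpR : ∑ i, p i * R i ≤ ∑ i, p i) :
    ∑ i, p i * logb 2 (R i) ≤ 0 := by
  have hterm : ∀ i, p i * log (R i) ≤ p i * R i - p i := fun i => by
    rcases (hp0 i).eq_or_lt with h | h
    · simp [← h]
    · nlinarith [log_le_sub_one_of_pos (hR i h)]
  have hlog : ∑ i, p i * log (R i) ≤ 0 :=
    (sum_le_sum fun i _ => hterm i).trans (by rw [sum_sub_distrib]; linarith)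
  simp only [logb, ← mul_div_assoc, ← sum_div]
  exact div_nonpos_of_nonpos_of_nonneg hlog (log_nonneg one_le_two)

lemma ent_le_logb_card {α : Type*} [Fintype α] {m : α → ℝ} (h0 : ∀ a, 0 ≤ m a)
    (h1 : ∑ a, m a = 1) : ent m ≤ logb 2 (Fintype.card α) := by
  set N : ℝ := (Fintype.card α : ℝ)
  have : Nonempty α := by
    by_contra h
    simp [not_nonempty_iff.mp h] at h1
  have hN : 0 < N := by positivity
  have hterm : ∀ a, m a * (N * m a)⁻¹ ≤ N⁻¹ := fun a => by
    rcases (h0 a).eq_or_lt with h | h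
    · simp [← h, hN.le]
    · rw [mul_inv, ← mul_assoc, mul_comm (m a), mul_assoc, mul_inv_cancel₀ h.ne', mul_one]
  -- Gibbs' inequality against the uniform distribution.
  have hgibbs := sum_mul_logb_nonpos h0 (R := fun a => (N * m a)⁻¹)
    (fun a _ => by positivity)
    (by
      rw [h1]
      calc ∑ a, m a * (N * m a)⁻¹ ≤ ∑ _a : α, N⁻¹ := sum_le_sum fun a _ => hterm a
        _ = 1 := by rw [sum_const, card_univ, nsmul_eq_mul, mul_inv_cancel₀ hN.ne'])
  have hsplit : ∀ a, m a * logb 2 (N * m a)⁻¹ = -(m a * logb 2 (m a)) - m a * logb 2 N :=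
    fun a => by
      rcases (h0 a).eq_or_lt with h | h
      · simp [← h]
      · rw [logb_inv, logb_mul hN.ne' h.ne']; ring
  simp only [hsplit, sum_sub_distrib, ← sum_mul, h1, one_mul] at hgibbs
  rw [ent]; linarith

section Submodular

-- `d` stands for the pair `(a, b)` and `c` for a common coarsening of `a` and `b`; for marginals
-- they are the restrictions to `S ∪ T`, `S`, `T` and `S ∩ T`.
variable {Ω α β γ δ : Type*} [Fintype Ω] {p : Ω → ℝ}
  {a : Ω → α} {b : Ω → β} {c : Ω → γ} {d : Ω → δ}

lemma sum_filter_div_law_le (hp0 : ∀ x, 0 ≤ p x)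
    (hd : ∀ x y, d x = d y ↔ a x = a y ∧ b x = b y)
    (hac : ∀ x y, a x = a y → c x = c y) (hbc : ∀ x y, b x = b y → c x = c y) (y z : Ω) :
    ∑ x ∈ univ.filter (fun x => a x = a y ∧ b x = b z),
        p x / (law p d (d x) * law p c (c x))
      ≤ if c z = c y then (law p c (c y))⁻¹ else 0 := by
  rcases (univ.filter fun x => a x = a y ∧ b x = b z).eq_empty_or_nonempty with hF | ⟨x₀, hx₀⟩
  · rw [hF, sum_empty]
    split_ifs
    exacts [inv_nonneg.2 (law_nonneg hp0 c _), le_rfl]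
  -- The filter is the `d`-fiber of `x₀`, on which `c` takes the value `c y = c z`.
  simp only [mem_filter, mem_univ, true_and] at hx₀
  have hF : univ.filter (fun x => a x = a y ∧ b x = b z) = univ.filter (fun x => d x = d x₀) := by
    ext x; simp [hd, hx₀.1, hx₀.2]
  rw [if_pos ((hbc _ _ hx₀.2).symm.trans (hac _ _ hx₀.1)), hF]
  calc ∑ x ∈ univ.filter (fun x => d x = d x₀), p x / (law p d (d x) * law p c (c x))
      = ∑ x ∈ univ.filter (fun x => d x = d x₀), p x / (law p d (d x₀) * law p c (c y)) := by
        refine sum_congr rfl fun x hx => ?_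
        have hx' := (hd x x₀).1 (mem_filter.1 hx).2
        rw [(mem_filter.1 hx).2, hac x y (hx'.1.trans hx₀.1)]
    _ = law p d (d x₀) / law p d (d x₀) * (law p c (c y))⁻¹ := by
        rw [← sum_div, div_mul_eq_div_div, div_eq_mul_inv _ (law p c _)]; rfl
    _ ≤ (law p c (c y))⁻¹ :=
        mul_le_of_le_one_left (inv_nonneg.2 (law_nonneg hp0 c _)) (div_self_le_one _)

lemma sum_mul_law_ratio_le (hp0 : ∀ x, 0 ≤ p x)
    (hd : ∀ x y, d x = d y ↔ a x = a y ∧ b x = b y)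
    (hac : ∀ x y, a x = a y → c x = c y) (hbc : ∀ x y, b x = b y → c x = c y) :
    ∑ x, p x * (law p a (a x) * law p b (b x) / (law p d (d x) * law p c (c x)))
      ≤ ∑ x, p x := by
  calc ∑ x, p x * (law p a (a x) * law p b (b x) / (law p d (d x) * law p c (c x)))
      = ∑ x, ∑ y, ∑ z, if a y = a x ∧ b z = b x then
          p y * p z * (p x / (law p d (d x) * law p c (c x))) else 0 := by
        refine sum_congr rfl fun x _ => ?_
        have hab : law p a (a x) * law p b (b x)
            = ∑ y, ∑ z, if a y = a x ∧ b z = b x then p y * p z else 0 := by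
          simp only [law, sum_filter, sum_mul_sum, ite_mul, mul_ite, zero_mul, mul_zero]
          exact sum_congr rfl fun y _ => sum_congr rfl fun z _ => by split_ifs <;> simp_all
        rw [mul_div_assoc', mul_comm, mul_div_assoc, hab, sum_mul]
        simp only [sum_mul, ite_mul, zero_mul]
    _ = ∑ y, ∑ z, p y * p z * ∑ x ∈ univ.filter (fun x => a x = a y ∧ b x = b z),
          p x / (law p d (d x) * law p c (c x)) := by
        rw [sum_comm]
        refine sum_congr rfl fun y _ => ?_
        rw [sum_comm]
        refine sum_congr rfl fun z _ => ?_
        rw [mul_sum, sum_filter]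
        refine sum_congr rfl fun x _ => ?_
        simp only [eq_comm]
    _ ≤ ∑ y, ∑ z, p y * p z * if c z = c y then (law p c (c y))⁻¹ else 0 :=
        sum_le_sum fun y _ => sum_le_sum fun z _ => mul_le_mul_of_nonneg_left
          (sum_filter_div_law_le hp0 hd hac hbc y z) (mul_nonneg (hp0 y) (hp0 z))
    _ = ∑ y, p y * (law p c (c y) * (law p c (c y))⁻¹) := by
        refine sum_congr rfl fun y _ => ?_
        simp only [law, mul_ite, mul_zero, ← sum_filter, ← mul_sum, sum_mul, mul_assoc]
    _ ≤ ∑ y, p y :=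
        sum_le_sum fun y _ => mul_le_of_le_one_right (hp0 y) (mul_inv_le_one)

theorem ent_law_add_le [Fintype α] [Fintype β] [Fintype γ] [Fintype δ] (hp0 : ∀ x, 0 ≤ p x)
    (hd : ∀ x y, d x = d y ↔ a x = a y ∧ b x = b y)
    (hac : ∀ x y, a x = a y → c x = c y) (hbc : ∀ x y, b x = b y → c x = c y) :
    ent (law p d) + ent (law p c) ≤ ent (law p a) + ent (law p b) := by
  set R : Ω → ℝ := fun x => law p a (a x) * law p b (b x) / (law p d (d x) * law p c (c x))
  have hgibbs : ∑ x, p x * logb 2 (R x) ≤ 0 :=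
    sum_mul_logb_nonpos hp0 (fun x hx => div_pos
      (mul_pos (law_apply_pos hp0 a hx) (law_apply_pos hp0 b hx))
      (mul_pos (law_apply_pos hp0 d hx) (law_apply_pos hp0 c hx)))
      (sum_mul_law_ratio_le hp0 hd hac hbc)
  have hsplit : ∀ x, p x * logb 2 (R x) = p x * -logb 2 (law p d (d x))
      + p x * -logb 2 (law p c (c x)) - p x * -logb 2 (law p a (a x))
      - p x * -logb 2 (law p b (b x)) := fun x => by
    rcases (hp0 x).eq_or_lt with hx | hx
    · simp [← hx]
    have ha := law_apply_pos hp0 a hx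
    have hb := law_apply_pos hp0 b hx
    have hc := law_apply_pos hp0 c hx
    have hd := law_apply_pos hp0 d hx
    rw [logb_div (by positivity) (by positivity), logb_mul ha.ne' hb.ne', logb_mul hd.ne' hc.ne']
    ring
  simp only [hsplit, sum_sub_distrib, sum_add_distrib] at hgibbs
  simp only [ent_law]
  linarith

end Submodular

section Marginal

variable {n : ℕ} {p : (Fin n → Bool) → ℝ}

lemma restrict_eq_restrict_iff {ι : Type*} {κ : ι → Type*} {S : Finset ι} {x y : ∀ i, κ i} :
    S.restrict x = S.restrict y ↔ ∀ i ∈ S, x i = y i := by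
  simp [funext_iff]

lemma marg_eq_law (p : (Fin n → Bool) → ℝ) (T : Finset (Fin n)) :
    marg p T = law p T.restrict := by
  funext a
  simp only [marg, law, funext_iff, Finset.restrict]

theorem ent_marg_union_add_inter_le (hp0 : ∀ x, 0 ≤ p x) (S T : Finset (Fin n)) :
    ent (marg p (S ∪ T)) + ent (marg p (S ∩ T)) ≤ ent (marg p S) + ent (marg p T) := by
  simp only [marg_eq_law]
  refine ent_law_add_le hp0 (fun x y => ?_) (fun x y h => ?_) (fun x y h => ?_)
  · simp only [restrict_eq_restrict_iff, forall_mem_union]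
  · rw [restrict_eq_restrict_iff] at h ⊢
    exact fun i hi => h i (mem_inter.1 hi).1
  · rw [restrict_eq_restrict_iff] at h ⊢
    exact fun i hi => h i (mem_inter.1 hi).2

lemma ent_marg_le_card (hp0 : ∀ x, 0 ≤ p x) (hp1 : ∑ x, p x = 1) (T : Finset (Fin n)) :
    ent (marg p T) ≤ #T := by
  rw [marg_eq_law]
  calc ent (law p T.restrict) ≤ logb 2 (Fintype.card (T → Bool)) :=
        ent_le_logb_card (law_nonneg hp0 _) (by rw [sum_law, hp1])
    _ = #T := by simp [logb_pow]

lemma ent_marg_empty (hp1 : ∑ x, p x = 1) : ent (marg p ∅) = 0 := by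
  rw [marg_eq_law, ent_law]
  simp [law_apply_of_subsingleton, hp1]

lemma ent_marg_univ : ent (marg p univ) = ent p := by
  have hlaw : ∀ x, law p (Finset.restrict univ) ((univ : Finset (Fin n)).restrict x) = p x :=
    fun x => by
      rw [law_apply_eq_of_fiber_iff (h := id) fun y => by simp [funext_iff]]
      simp [law, filter_eq']
  rw [marg_eq_law, ent_law]
  simp only [hlaw, ent, mul_neg]

end Marginal

section Shearer

lemma card_filter_mem_powersetCard {α : Type*} [DecidableEq α] {s : Finset α} {i : α}
    (hi : i ∈ s) (t : ℕ) : #{T ∈ powersetCard (t + 1) s | i ∈ T} = (#s - 1).choose t := by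
  have hnot : {T ∈ powersetCard (t + 1) s | i ∉ T} = powersetCard (t + 1) (s.erase i) := by
    ext T; simp [mem_powersetCard, subset_erase, and_right_comm]
  have hsplit := card_filter_add_card_filter_not (s := powersetCard (t + 1) s) (i ∈ ·)
  obtain ⟨m, hm⟩ : ∃ m, #s = m + 1 := ⟨_, (Nat.succ_pred_eq_of_pos (card_pos.2 ⟨i, hi⟩)).symm⟩
  rw [hnot, card_powersetCard, card_powersetCard, card_erase_of_mem hi, hm,
    Nat.choose_succ_succ', Nat.add_sub_cancel] at hsplit
  rw [hm, Nat.add_sub_cancel]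
  omega

lemma sum_powersetCard_sum {α M : Type*} [DecidableEq α] [AddCommMonoid M] (s : Finset α)
    (t : ℕ) (f : α → M) :
    ∑ T ∈ powersetCard (t + 1) s, ∑ i ∈ T, f i = (#s - 1).choose t • ∑ i ∈ s, f i := by
  rw [sum_comm' (t' := s) (s' := fun i => {T ∈ powersetCard (t + 1) s | i ∈ T}), smul_sum]
  · exact sum_congr rfl fun i hi => by rw [sum_const, card_filter_mem_powersetCard hi]
  · intro T i
    simp only [mem_filter, mem_powersetCard]
    exact ⟨fun h => ⟨⟨h.1, h.2⟩, h.1.1 h.2⟩, fun h => ⟨h.1.1, h.1.2⟩⟩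

variable {n : ℕ} {f : Finset (Fin n) → ℝ}

def initialSeg (n j : ℕ) : Finset (Fin n) := univ.filter fun i => (i : ℕ) < j

lemma sum_initialSeg_increment_univ :
    ∑ i : Fin n, (f (initialSeg n (i + 1)) - f (initialSeg n i)) = f univ - f ∅ := by
  rw [Fin.sum_univ_eq_sum_range (fun j => f (initialSeg n (j + 1)) - f (initialSeg n j)),
    sum_range_sub (fun j => f (initialSeg n j))]
  congr 2 <;> ext i <;> simp [initialSeg]

lemma sum_initialSeg_increment_le (hf : ∀ S T, f (S ∪ T) + f (S ∩ T) ≤ f S + f T)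
    (T : Finset (Fin n)) :
    ∑ i ∈ T, (f (initialSeg n (i + 1)) - f (initialSeg n i)) ≤ f T - f ∅ := by
  induction T using Finset.induction_on_max with
  | empty => simp
  | insert a s hlt ih =>
    have has : a ∉ s := fun h => lt_irrefl a (hlt a h)
    have hunion : insert a s ∪ initialSeg n a = initialSeg n (a + 1) := by
      ext i
      simp only [initialSeg, mem_union, mem_insert, mem_filter, mem_univ, true_and]
      have := fun h => Fin.lt_def.1 (hlt i h)
      grind [Fin.ext_iff]
    have hinter : insert a s ∩ initialSeg n a = s := by
      ext i
      simp only [initialSeg, mem_inter, mem_insert, mem_filter, mem_univ, true_and]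
      have := fun h => Fin.lt_def.1 (hlt i h)
      grind
    have := hf (insert a s) (initialSeg n a)
    rw [hunion, hinter] at this
    rw [sum_insert has]
    linarith

theorem choose_mul_le_sum_powersetCard (hf : ∀ S T, f (S ∪ T) + f (S ∩ T) ≤ f S + f T)
    (hf0 : f ∅ = 0) (t : ℕ) :
    (n - 1).choose t * f univ ≤ ∑ T ∈ powersetCard (t + 1) univ, f T := by
  calc (n - 1).choose t * f univ
      = ∑ T ∈ powersetCard (t + 1) (univ : Finset (Fin n)), ∑ i ∈ T,
          (f (initialSeg n (i + 1)) - f (initialSeg n i)) := by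
        rw [sum_powersetCard_sum, card_univ, Fintype.card_fin, nsmul_eq_mul,
          sum_initialSeg_increment_univ, hf0, sub_zero]
    _ ≤ ∑ T ∈ powersetCard (t + 1) univ, f T :=
        sum_le_sum fun T _ => (sum_initialSeg_increment_le hf T).trans_eq (by rw [hf0, sub_zero])

end Shearer

theorem mul_sum_sub_ent_marg_le {n : ℕ} {p : (Fin n → Bool) → ℝ} (hp0 : ∀ x, 0 ≤ p x)
    (hp1 : ∑ x, p x = 1) {k : ℝ} (hent : n - k ≤ ent p) (t : ℕ) :
    n * ∑ T ∈ powersetCard (t + 1) univ, ((↑(t + 1) : ℝ) - ent (marg p T))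
      ≤ ↑(t + 1) * n.choose (t + 1) * k := by
  have hchoose : (n : ℝ) * (n - 1).choose t = ↑(t + 1) * n.choose (t + 1) := by
    rcases n with _ | m
    · simp
    · exact_mod_cast (Nat.add_one_mul_choose_eq m t).trans (mul_comm _ _)
  have hshearer := choose_mul_le_sum_powersetCard (f := fun T => ent (marg p T))
    (ent_marg_union_add_inter_le hp0) (ent_marg_empty hp1) t
  simp only [ent_marg_univ] at hshearer
  rw [sum_sub_distrib, sum_const, card_powersetCard, card_univ, Fintype.card_fin, nsmul_eq_mul]
  calc (n : ℝ) * (n.choose (t + 1) * ↑(t + 1) - ∑ T ∈ powersetCard (t + 1) univ, ent (marg p T))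
      ≤ n * (n.choose (t + 1) * ↑(t + 1) - (n - 1).choose t * (n - k)) := by
        gcongr
        exact hshearer.trans' (by gcongr)
    _ = ↑(t + 1) * n.choose (t + 1) * k := by linear_combination (k - n) * hchoose

lemma one_sub_mul_card_le_card_filter_le {ι : Type*} {s : Finset ι} {g : ι → ℝ} {a δ : ℝ}
    (ha : 0 ≤ a) (hδ : 0 ≤ δ) (hg : ∀ i ∈ s, 0 ≤ g i) (hsum : ∑ i ∈ s, g i ≤ δ * #s * a) :
    (1 - δ) * #s ≤ #{i ∈ s | g i ≤ a} := by
  have hsplit := card_filter_add_card_filter_not (s := s) (g · ≤ a)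
  suffices hbad : (#{i ∈ s | ¬g i ≤ a} : ℝ) ≤ δ * #s by
    have : (#{i ∈ s | g i ≤ a} : ℝ) + #{i ∈ s | ¬g i ≤ a} = #s := by exact_mod_cast hsplit
    linarith
  rcases Finset.eq_empty_or_nonempty {i ∈ s | ¬g i ≤ a} with hB | hB
  · rw [hB, card_empty, Nat.cast_zero]; positivity
  have hlt : #{i ∈ s | ¬g i ≤ a} * a < δ * #s * a :=
    calc #{i ∈ s | ¬g i ≤ a} * a = ∑ i ∈ s with ¬g i ≤ a, a := by rw [sum_const, nsmul_eq_mul]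
      _ < ∑ i ∈ s with ¬g i ≤ a, g i :=
        sum_lt_sum_of_nonempty hB fun i hi => not_le.1 (mem_filter.1 hi).2
      _ ≤ ∑ i ∈ s, g i :=
        sum_le_sum_of_subset_of_nonneg (filter_subset _ _) fun i hi _ => hg i hi
      _ ≤ δ * #s * a := hsum
  exact (lt_of_mul_lt_mul_right hlt ha).le


end MarginalEntropy

open MarginalEntropy in
/-- If `H(X) ≥ n - k` then for a uniformly random `t`-subset `T` of `[n]`,
with probability at least `1 - δ` we have `H(X_T) ≥ t - kt/(δn)`. -/
theorem stmt3 (n : ℕ) (p : (Fin n → Bool) → ℝ)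
    (hp0 : ∀ x, 0 ≤ p x) (hp1 : ∑ x, p x = 1)
    (k : ℝ) (hk : 0 ≤ k) (hent : (n : ℝ) - k ≤ ent p)
    (t : ℕ) (ht1 : 1 ≤ t) (htn : t ≤ n) (δ : ℝ) (hδ : 0 < δ) :
    (1 - δ) * (n.choose t) ≤
      (((Finset.powersetCard t (Finset.univ : Finset (Fin n))).filter
        (fun T => (t : ℝ) - k * t / (δ * n) ≤ ent (marg p T))).card : ℝ) := by
  obtain ⟨t, rfl⟩ := Nat.exists_eq_add_of_le' ht1
  have hn : (0 : ℝ) < n := by exact_mod_cast ht1.trans htn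
  have hmarkov := one_sub_mul_card_le_card_filter_le (s := powersetCard (t + 1) univ)
    (g := fun T => (↑(t + 1) : ℝ) - ent (marg p T)) (a := k * ↑(t + 1) / (δ * n))
    (by positivity) hδ.le
    (fun T hT => sub_nonneg.2 ((ent_marg_le_card hp0 hp1 T).trans_eq
      (by rw [(mem_powersetCard.1 hT).2])))
    (by
      rw [card_powersetCard, card_univ, Fintype.card_fin, ← mul_div_assoc,
        le_div_iff₀ (by positivity)]
      nlinarith [mul_sum_sub_ent_marg_le hp0 hp1 hent t])
  rw [card_powersetCard, card_univ, Fintype.card_fin] at hmarkov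
  convert hmarkov using 4
  simp only [sub_le_comm]
end

section
/- Let 𝒜 be a downward-closed family of subsets of a 10r-element set U, with |𝒜| ≥ 2^{10r - c}. Let τ be the fraction of r-element subsets of U that belong to 𝒜. Then |𝒜| ≤ Σ_{i=0}^{r-1} C(10r, i) + τ · 2^{10r}, and hence τ ≥ 2^{-c} - 2^{-5r} ≥ 1 - c·ln 2 - 2^{-5r}. -/
open Finset
open scoped FinsetFamily

/-! By the local LYM inequality, and because the shadow of the `(k+1)`-slice of a downward-closed
family lies in its `k`-slice, the slice densities `|𝒜 # k| / C(n, k)` are non-increasing in `k`.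
Hence the slices of size `≥ r` contribute at most `τ · 2^n` to `|𝒜|` and the smaller ones at most
`Σ_{i<r} C(n, i)`, which for `n = 10r` is at most `2^{5r}`. Dividing `2^{10r-c} ≤ 2^{5r} + τ 2^{10r}`
by `2^{10r}` bounds `τ`, and `2^{-c} = exp (-c log 2) ≥ 1 - c log 2`. -/

namespace Finset

variable {α : Type*}

noncomputable def sliceDensity [Fintype α] (𝒜 : Finset (Finset α)) (k : ℕ) : ℝ :=
  #(𝒜 # k) / (Fintype.card α).choose k

lemma filter_mem_powersetCard_univ [Fintype α] [DecidableEq α] (𝒜 : Finset (Finset α)) (r : ℕ) :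
    {A ∈ powersetCard r (univ : Finset α) | A ∈ 𝒜} = 𝒜 # r := by
  ext A
  simp only [mem_filter, mem_powersetCard_univ, mem_slice, and_comm]

lemma sliceDensity_nonneg [Fintype α] (𝒜 : Finset (Finset α)) (k : ℕ) : 0 ≤ sliceDensity 𝒜 k := by
  unfold sliceDensity
  positivity

lemma card_slice_eq_sliceDensity_mul [Fintype α] (𝒜 : Finset (Finset α)) {k : ℕ}
    (hk : k ≤ Fintype.card α) :
    (#(𝒜 # k) : ℝ) = sliceDensity 𝒜 k * (Fintype.card α).choose k := by
  have : ((Fintype.card α).choose k : ℝ) ≠ 0 := by exact_mod_cast (Nat.choose_pos hk).ne'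
  rw [sliceDensity, div_mul_cancel₀ _ this]

end Finset

namespace IsLowerSet

variable {α : Type*} {𝒜 : Finset (Finset α)}

lemma shadow_slice_succ_subset [DecidableEq α] (h𝒜 : IsLowerSet (𝒜 : Set (Finset α))) (k : ℕ) :
    ∂ (𝒜 # (k + 1)) ⊆ 𝒜 # k := by
  intro s hs
  obtain ⟨t, ht, a, ha, rfl⟩ := mem_shadow_iff.1 hs
  rw [mem_slice] at ht ⊢
  exact ⟨h𝒜 (erase_subset a t) ht.1, by rw [card_erase_of_mem ha, ht.2, Nat.add_sub_cancel]⟩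

lemma antitone_sliceDensity [Fintype α] (h𝒜 : IsLowerSet (𝒜 : Set (Finset α))) :
    Antitone (sliceDensity 𝒜) := by
  classical
  refine antitone_nat_of_succ_le fun k => ?_
  calc sliceDensity 𝒜 (k + 1)
      ≤ #(∂ (𝒜 # (k + 1))) / (Fintype.card α).choose k :=
        local_lubell_yamamoto_meshalkin_inequality_div k.succ_ne_zero sized_slice
    _ ≤ sliceDensity 𝒜 k := by
        unfold sliceDensity
        gcongr
        exact h𝒜.shadow_slice_succ_subset k

lemma card_le_sum_choose_add_sliceDensity_mul [Fintype α]
    (h𝒜 : IsLowerSet (𝒜 : Set (Finset α))) (r : ℕ) :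
    (#𝒜 : ℝ) ≤ ∑ i ∈ range r, ((Fintype.card α).choose i : ℝ)
      + sliceDensity 𝒜 r * 2 ^ Fintype.card α := by
  set n := Fintype.card α
  have h_low : ∑ k ∈ Iic n with k < r, (#(𝒜 # k) : ℝ) ≤ ∑ i ∈ range r, (n.choose i : ℝ) := by
    calc ∑ k ∈ Iic n with k < r, (#(𝒜 # k) : ℝ)
        ≤ ∑ k ∈ Iic n with k < r, (n.choose k : ℝ) :=
          sum_le_sum fun k _ => by exact_mod_cast sized_slice.card_le
      _ ≤ ∑ i ∈ range r, (n.choose i : ℝ) :=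
          sum_le_sum_of_subset_of_nonneg (fun _ hk => by simp_all) fun _ _ _ => by positivity
  have h_high : ∑ k ∈ Iic n with ¬k < r, (#(𝒜 # k) : ℝ) ≤ sliceDensity 𝒜 r * 2 ^ n := by
    calc ∑ k ∈ Iic n with ¬k < r, (#(𝒜 # k) : ℝ)
        ≤ ∑ k ∈ Iic n with ¬k < r, sliceDensity 𝒜 r * n.choose k := by
          refine sum_le_sum fun k hk => ?_
          rw [mem_filter, mem_Iic, not_lt] at hk
          rw [card_slice_eq_sliceDensity_mul 𝒜 hk.1]
          gcongr
          exact h𝒜.antitone_sliceDensity hk.2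
      _ ≤ ∑ k ∈ Iic n, sliceDensity 𝒜 r * n.choose k :=
          sum_le_sum_of_subset_of_nonneg (filter_subset _ _) fun _ _ _ =>
            mul_nonneg (sliceDensity_nonneg 𝒜 r) (Nat.cast_nonneg _)
      _ = sliceDensity 𝒜 r * 2 ^ n := by
          rw [← mul_sum, ← Nat.range_succ_eq_Iic, ← Nat.cast_sum, Nat.sum_range_choose,
            Nat.cast_pow, Nat.cast_two]
  rw [← sum_card_slice, Nat.cast_sum, ← sum_filter_add_sum_filter_not _ (· < r)]
  exact add_le_add h_low h_high

end IsLowerSet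

lemma Nat.sum_range_choose_mul_pow_le (n r : ℕ) {y : ℕ} (hy : 1 ≤ y) :
    (∑ i ∈ range r, n.choose i) * y ^ (n + 1 - r) ≤ (1 + y) ^ n := by
  rw [add_pow, sum_mul]
  calc ∑ i ∈ range r, n.choose i * y ^ (n + 1 - r)
      ≤ ∑ i ∈ range r, 1 ^ i * y ^ (n - i) * n.choose i :=
        sum_le_sum fun i hi => by
          rw [one_pow, one_mul, mul_comm]
          exact Nat.mul_le_mul_right _ (Nat.pow_le_pow_right hy (by simp at hi; omega))
    _ ≤ ∑ i ∈ range (n + 1), 1 ^ i * y ^ (n - i) * n.choose i :=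
        sum_le_sum_of_ne_zero fun i _ hi => by
          rw [mem_range, Nat.lt_succ_iff]
          by_contra h
          simp [Nat.choose_eq_zero_of_lt (not_le.1 h)] at hi

/-- Weight the `i`-th binomial by `9 ^ (10r - i)` and use `10 ^ 10 ≤ 2 ^ 5 * 9 ^ 9`. -/
lemma Nat.sum_range_choose_ten_mul_le (r : ℕ) : ∑ i ∈ range r, (10 * r).choose i ≤ 2 ^ (5 * r) := by
  have h_weighted := Nat.sum_range_choose_mul_pow_le (10 * r) r (y := 9) (by norm_num)
  rw [show 10 * r + 1 - r = 9 * r + 1 by omega] at h_weighted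
  refine Nat.le_of_mul_le_mul_right (h_weighted.trans ?_) (by positivity : 0 < 9 ^ (9 * r + 1))
  calc (1 + 9) ^ (10 * r) = (10 ^ 10) ^ r := by rw [← pow_mul, mul_comm]
    _ ≤ (2 ^ 5 * 9 ^ 9) ^ r := Nat.pow_le_pow_left (by norm_num) r
    _ = 2 ^ (5 * r) * 9 ^ (9 * r) := by rw [mul_pow, ← pow_mul, ← pow_mul]
    _ ≤ 2 ^ (5 * r) * 9 ^ (9 * r + 1) := by gcongr <;> omega

lemma Real.one_sub_mul_log_le_rpow_neg {b : ℝ} (hb : 0 < b) (c : ℝ) :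
    1 - c * Real.log b ≤ b ^ (-c) := by
  rw [Real.rpow_def_of_pos hb]
  linarith [Real.add_one_le_exp (Real.log b * -c)]

theorem stmt13_general (r : ℕ) (U : Type*) [Fintype U] [DecidableEq U]
    (hU : Fintype.card U = 10 * r)
    (𝒜 : Finset (Finset U)) (hdc : ∀ S T : Finset U, S ⊆ T → T ∈ 𝒜 → S ∈ 𝒜)
    (c : ℝ) (h𝒜 : (2 : ℝ) ^ ((10 * r : ℝ) - c) ≤ (𝒜.card : ℝ))
    (τ : ℝ)
    (hτ : τ = (((Finset.powersetCard r (Finset.univ : Finset U)).filter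
      (fun A => A ∈ 𝒜)).card : ℝ) / ((10 * r).choose r)) :
    (𝒜.card : ℝ) ≤ (∑ i ∈ Finset.range r, ((10 * r).choose i) : ℝ) + τ * 2 ^ (10 * r) ∧
    (2 : ℝ) ^ (-c) - 2 ^ (-(5 * r : ℝ)) ≤ τ ∧
    1 - c * Real.log 2 - 2 ^ (-(5 * r : ℝ)) ≤ (2 : ℝ) ^ (-c) - 2 ^ (-(5 * r : ℝ)) := by
  have h_lower : IsLowerSet (𝒜 : Set (Finset U)) := fun T S hST hT => hdc S T hST hT
  have hτ_density : τ = sliceDensity 𝒜 r := by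
    rw [hτ, sliceDensity, hU, filter_mem_powersetCard_univ]
  have h_card := h_lower.card_le_sum_choose_add_sliceDensity_mul r
  rw [hU, ← hτ_density] at h_card
  refine ⟨h_card, ?_, by linarith [Real.one_sub_mul_log_le_rpow_neg two_pos c]⟩
  have h_tail : (∑ i ∈ range r, ((10 * r).choose i : ℝ)) ≤ 2 ^ (5 * r) := by
    exact_mod_cast Nat.sum_range_choose_ten_mul_le r
  have h_split : (2 : ℝ) ^ ((10 * r : ℝ) - c) = 2 ^ (-c) * 2 ^ (10 * r) := by
    rw [sub_eq_neg_add, Real.rpow_add two_pos, ← Real.rpow_natCast]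
    push_cast
    rfl
  have h_half : (2 : ℝ) ^ (-(5 * r : ℝ)) * 2 ^ (10 * r) = 2 ^ (5 * r) := by
    rw [Real.rpow_neg zero_le_two, ← Real.rpow_natCast, ← Real.rpow_natCast, inv_mul_eq_div,
      ← Real.rpow_sub two_pos]
    push_cast
    ring_nf
  rw [← mul_le_mul_iff_of_pos_right (by positivity : (0 : ℝ) < 2 ^ (10 * r)), sub_mul, h_half]
  linarith

/-- For a downward-closed family `𝒜` over a `10r`-element universe with
`|𝒜| ≥ 2^{10r-c}`, the fraction `τ` of `r`-subsets lying in `𝒜` satisfies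
`|𝒜| ≤ Σ_{i<r} C(10r,i) + τ·2^{10r}`, hence
`τ ≥ 2^{-c} - 2^{-5r} ≥ 1 - c·ln 2 - 2^{-5r}`. -/
theorem stmt13 (r : ℕ) (hr : 1 ≤ r) (U : Type*) [Fintype U] [DecidableEq U]
    (hU : Fintype.card U = 10 * r)
    (𝒜 : Finset (Finset U)) (hdc : ∀ S T : Finset U, S ⊆ T → T ∈ 𝒜 → S ∈ 𝒜)
    (c : ℝ) (h𝒜 : (2 : ℝ) ^ ((10 * r : ℝ) - c) ≤ (𝒜.card : ℝ))
    (τ : ℝ)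
    (hτ : τ = (((Finset.powersetCard r (Finset.univ : Finset U)).filter
      (fun A => A ∈ 𝒜)).card : ℝ) / ((10 * r).choose r)) :
    (𝒜.card : ℝ) ≤ (∑ i ∈ Finset.range r, ((10 * r).choose i) : ℝ) + τ * 2 ^ (10 * r) ∧
    (2 : ℝ) ^ (-c) - 2 ^ (-(5 * r : ℝ)) ≤ τ ∧
    1 - c * Real.log 2 - 2 ^ (-(5 * r : ℝ)) ≤ (2 : ℝ) ^ (-c) - 2 ^ (-(5 * r : ℝ)) :=
  stmt13_general r U hU 𝒜 hdc c h𝒜 τ hτ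
end
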